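/- Let A = KQ/I be a special biserial algebra over an algebraically closed field K, b a band for A, λ ∈ K^×, r ≥ 1, and N = M(b,λ,r). If v is a string obtained from the cyclic word b by deleting one letter, then D(M(v)) ⊆ D(N). -/

import Mathlib

attribute [local instance] Classical.propDecidable

/-- A finite quiver: finite sets of vertices and arrows with source and target maps. -/
structure FinQuiver where
  V : Type
  A : Type
  [fintypeV : Fintype V]
  [decEqV : DecidableEq V]
  [fintypeA : Fintype A]
  [decEqA : DecidableEq A]
  s : A → V
  t : A → V

attribute [instance] FinQuiver.fintypeV FinQuiver.decEqV FinQuiver.fintypeA FinQuiver.decEqA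

/-- A finite-dimensional representation of a finite quiver over a field `K`. -/
structure QRep (K : Type) [Field K] (Q : FinQuiver) where
  M : Q.V → Type
  [acg : ∀ i, AddCommGroup (M i)]
  [mod : ∀ i, Module K (M i)]
  [fd : ∀ i, FiniteDimensional K (M i)]
  φ : ∀ a : Q.A, M (Q.s a) →ₗ[K] M (Q.t a)

attribute [instance] QRep.acg QRep.mod QRep.fd

/-- A subrepresentation: a subspace at every vertex, compatible with the arrow maps. -/
structure QSubRep {K : Type} [Field K] {Q : FinQuiver} (R : QRep K Q) where
  L : ∀ i, Submodule K (R.M i)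
  compat : ∀ a : Q.A, ∀ x ∈ L (Q.s a), R.φ a x ∈ L (Q.t a)

def QSubRep.le {K : Type} [Field K] {Q : FinQuiver} {R : QRep K Q} (N N' : QSubRep R) : Prop :=
  ∀ i, N.L i ≤ N'.L i

/-- The dimension vector of a representation. -/
noncomputable def QRep.dimVec {K : Type} [Field K] {Q : FinQuiver} (R : QRep K Q) (i : Q.V) : ℕ :=
  Module.finrank K (R.M i)

/-- Standard inner product of a real vector with a dimension vector. -/
def stabInner {Q : FinQuiver} (v : Q.V → ℝ) (d : Q.V → ℕ) : ℝ :=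
  ∑ i, v i * (d i : ℝ)

/-- `v`-semistability of a representation. -/
def IsSemistable {K : Type} [Field K] {Q : FinQuiver} (R : QRep K Q) (v : Q.V → ℝ) : Prop :=
  stabInner v R.dimVec = 0 ∧
    ∀ N : QSubRep R, stabInner v (fun i => Module.finrank K (N.L i)) ≤ 0

/-- The stability space of a representation. -/
def stabSpace {K : Type} [Field K] {Q : FinQuiver} (R : QRep K Q) : Set (Q.V → ℝ) :=
  {v | IsSemistable R v}

/-- `v`-stability of a representation. -/
def IsStable {K : Type} [Field K] {Q : FinQuiver} (R : QRep K Q) (v : Q.V → ℝ) : Prop :=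
  stabInner v R.dimVec = 0 ∧
    ∀ N : QSubRep R, (∃ i, N.L i ≠ ⊥) → (∃ i, N.L i ≠ ⊤) →
      stabInner v (fun i => Module.finrank K (N.L i)) < 0

/-- The thin sincere representation with identity maps: `K` at every vertex. -/
noncomputable def thinRep (K : Type) [Field K] (Q : FinQuiver) : QRep K Q where
  M _ := K
  φ _ := LinearMap.id

/-- The set of all finite non-negative real linear combinations of elements of `X`. -/
def coneSpan {E : Type} [AddCommMonoid E] [Module ℝ E] (X : Set E) : Set E :=
  {x | ∃ (n : ℕ) (c : Fin n → ℝ) (f : Fin n → E),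
    (∀ j, 0 ≤ c j) ∧ (∀ j, f j ∈ X) ∧ x = ∑ j, c j • f j}

/-- The standard basis vector of `ℝ^{Q₀}` at a vertex. -/
noncomputable def eVec (Q : FinQuiver) (i : Q.V) : Q.V → ℝ := Pi.single i 1

/-- A subrepresentation viewed as a representation in its own right. -/
noncomputable def QSubRep.toRep {K : Type} [Field K] {Q : FinQuiver} {R : QRep K Q}
    (N : QSubRep R) : QRep K Q where
  M i := ↥(N.L i)
  φ a := (R.φ a).restrict (fun x hx => N.compat a x hx)

/-- The quotient of a representation by a subrepresentation. -/
noncomputable def QRep.quotBy {K : Type} [Field K] {Q : FinQuiver} (R : QRep K Q)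
    (N : QSubRep R) : QRep K Q where
  M i := R.M i ⧸ N.L i
  φ a := Submodule.mapQ _ _ (R.φ a) (fun x hx => N.compat a x hx)

/-- The quotient `N'/N` of nested subrepresentations, as a representation. -/
noncomputable def quotRep {K : Type} [Field K] {Q : FinQuiver} (R : QRep K Q)
    (N N' : QSubRep R) (h : QSubRep.le N N') : QRep K Q where
  M i := ↥(N'.L i) ⧸ Submodule.comap (N'.L i).subtype (N.L i)
  φ a := Submodule.mapQ _ _ ((R.φ a).restrict (fun x hx => N'.compat a x hx))
    (by
      intro x hx
      simp only [Submodule.mem_comap, Submodule.subtype_apply,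
        LinearMap.restrict_apply] at hx ⊢
      exact N.compat a _ hx)

/-- A representation is nonzero if some vertex space is nonzero. -/
def QRep.Nonzero {K : Type} [Field K] {Q : FinQuiver} (R : QRep K Q) : Prop :=
  ∃ i, Module.finrank K (R.M i) ≠ 0

/-- Indecomposability: nonzero and admitting no internal direct sum decomposition into two
nonzero subrepresentations. -/
def Indecomposable {K : Type} [Field K] {Q : FinQuiver} (R : QRep K Q) : Prop :=
  R.Nonzero ∧
    ¬∃ U W : QSubRep R, (∃ i, U.L i ≠ ⊥) ∧ (∃ i, W.L i ≠ ⊥) ∧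
      (∀ i, U.L i ⊓ W.L i = ⊥) ∧ (∀ i, U.L i ⊔ W.L i = ⊤)

/-- Isomorphism of representations. -/
def RepIso {K : Type} [Field K] {Q : FinQuiver} (R R' : QRep K Q) : Prop :=
  ∃ f : ∀ i, R.M i ≃ₗ[K] R'.M i,
    ∀ (a : Q.A) (x : R.M (Q.s a)), f (Q.t a) (R.φ a x) = R'.φ a (f (Q.s a) x)

/-- The support of a representation. -/
def QRep.supp {K : Type} [Field K] {Q : FinQuiver} (R : QRep K Q) : Set Q.V :=
  {i | Module.finrank K (R.M i) ≠ 0}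

/-- The stability space restricted to the coordinate subspace of the support. -/
def Dsupp {K : Type} [Field K] {Q : FinQuiver} (R : QRep K Q) : Set (Q.V → ℝ) :=
  stabSpace R ∩ {v | ∀ i, i ∉ R.supp → v i = 0}

/-- Standard inner product on `ℝ^V`. -/
def rInner {V : Type} [Fintype V] (a v : V → ℝ) : ℝ := ∑ i, a i * v i

/-- A face of a polyhedral cone. -/
def IsFace {V : Type} [Fintype V] (C F : Set (V → ℝ)) : Prop :=
  ∃ a : V → ℝ, (∀ v ∈ C, rInner a v ≤ 0) ∧ F = C ∩ {v | rInner a v = 0}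

/-- The dimension of the linear span of a subset of `ℝ^V`. -/
noncomputable def coneDim {V : Type} [Fintype V] (F : Set (V → ℝ)) : ℕ :=
  Module.finrank ℝ ↥(Submodule.span ℝ F)

/-- A facet: a face of codimension one. -/
def IsFacet {V : Type} [Fintype V] (C F : Set (V → ℝ)) : Prop :=
  IsFace C F ∧ coneDim F + 1 = coneDim C

/-- Composability of a list of arrows (a directed path). -/
def PathComposable {Q : FinQuiver} : List Q.A → Prop
  | [] => True
  | [_] => True
  | a :: b :: l => Q.t a = Q.s b ∧ PathComposable (b :: l)

/-- Letters: direct arrows (`inl`) and formal inverses of arrows (`inr`). -/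
abbrev Letter (Q : FinQuiver) := Q.A ⊕ Q.A

/-- Source of a letter. -/
def lsrc {Q : FinQuiver} : Letter Q → Q.V
  | Sum.inl a => Q.s a
  | Sum.inr a => Q.t a

/-- Target of a letter. -/
def ltgt {Q : FinQuiver} : Letter Q → Q.V
  | Sum.inl a => Q.t a
  | Sum.inr a => Q.s a

/-- The formal inverse of a letter. -/
def linv {Q : FinQuiver} : Letter Q → Letter Q
  | Sum.inl a => Sum.inr a
  | Sum.inr a => Sum.inl a

/-- The underlying quiver arrow of a letter. -/
def und {Q : FinQuiver} : Letter Q → Q.A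
  | Sum.inl a => a
  | Sum.inr a => a

/-- A letter is direct if it is an arrow (not a formal inverse). -/
def isDir {Q : FinQuiver} (c : Letter Q) : Prop := c.isLeft = true

/-- Composability of a word of letters. -/
def WordComposable {Q : FinQuiver} : List (Letter Q) → Prop
  | [] => True
  | [_] => True
  | c :: d :: l => ltgt c = lsrc d ∧ WordComposable (d :: l)

/-- Reducedness of a word: no letter is followed by its own inverse. -/
def WordReduced {Q : FinQuiver} : List (Letter Q) → Prop
  | [] => True
  | [_] => True
  | c :: d :: l => d ≠ linv c ∧ WordReduced (d :: l)

/-- A bound quiver: a set of (monomial) relations generating an admissible ideal. -/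
structure BoundQuiver (Q : FinQuiver) where
  rel : List Q.A → Prop
  adm_comp : ∀ u, rel u → PathComposable u ∧ 2 ≤ u.length
  adm_bound : ∃ N : ℕ, ∀ u : List Q.A, PathComposable u → N ≤ u.length →
    ∃ u', rel u' ∧ u' <:+: u

/-- The special biserial conditions on a bound quiver algebra. -/
def SpecialBiserial {Q : FinQuiver} (D : BoundQuiver Q) : Prop :=
  (∀ v : Q.V, Set.ncard {a : Q.A | Q.s a = v} ≤ 2) ∧
  (∀ v : Q.V, Set.ncard {a : Q.A | Q.t a = v} ≤ 2) ∧
  (∀ a c d : Q.A, Q.t a = Q.s c → Q.t a = Q.s d → c ≠ d → D.rel [a, c] ∨ D.rel [a, d]) ∧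
  (∀ a b c : Q.A, Q.t a = Q.s c → Q.t b = Q.s c → a ≠ b → D.rel [a, c] ∨ D.rel [b, c])

/-- A string: a nonempty composable reduced word such that no subword of it or of its
inverse lies in the ideal. -/
structure IsString {Q : FinQuiver} (D : BoundQuiver Q) (w : List (Letter Q)) : Prop where
  ne : w ≠ []
  comp : WordComposable w
  red : WordReduced w
  avoid : ∀ u : List Q.A, u.map Sum.inl <:+: w → ¬D.rel u
  avoid_inv : ∀ u : List Q.A, (u.map Sum.inr).reverse <:+: w → ¬D.rel u

/-- The `k`-fold concatenation of a word with itself. -/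
def listPow {α : Type} (u : List α) : ℕ → List α
  | 0 => []
  | n + 1 => u ++ listPow u n

/-- A band: a cyclic word all of whose powers are strings, which is not itself a proper
power of a shorter word. -/
def IsBand {Q : FinQuiver} (D : BoundQuiver Q) (b : List (Letter Q)) : Prop :=
  b ≠ [] ∧ (∀ m : ℕ, 1 ≤ m → IsString D (listPow b m)) ∧
    ∀ (u : List (Letter Q)) (k : ℕ), 2 ≤ k → b ≠ listPow u k

/-- The `j`-th vertex visited by a (nonempty) walk `w`. -/
def wVtx {Q : FinQuiver} (w : List (Letter Q)) (hw : w ≠ []) (j : ℕ) : Q.V :=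
  if j = 0 then lsrc (w.head hw) else ltgt (w.getD (j - 1) (w.head hw))

/-- The basis vector at position `j` is sent to the one at position `k` by the arrow `a`. -/
def stepsTo {Q : FinQuiver} (w : List (Letter Q)) (a : Q.A) (j k : ℕ) : Prop :=
  (k = j + 1 ∧ w[j]? = some (Sum.inl a)) ∨ (j = k + 1 ∧ w[k]? = some (Sum.inr a))

/-- The string module `M(w)` of a nonempty walk `w`, with one standard basis vector for each
vertex visit, direct letters acting forwards and inverse letters acting backwards. -/
noncomputable def stringRep (K : Type) [Field K] (Q : FinQuiver) (w : List (Letter Q))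
    (hw : w ≠ []) : QRep K Q where
  M i := ({j : Fin (w.length + 1) // wVtx w hw j = i} → K)
  φ a := Matrix.mulVecLin
    (fun (p : {j : Fin (w.length + 1) // wVtx w hw (j : ℕ) = Q.t a})
         (q : {j : Fin (w.length + 1) // wVtx w hw (j : ℕ) = Q.s a}) =>
      if stepsTo w a (q.1 : ℕ) (p.1 : ℕ) then (1 : K) else 0)

/-- The vertex `v_j` traversed by a cyclic word (indices mod the length). -/
def bVtx {Q : FinQuiver} (b : List (Letter Q)) (hb : b ≠ []) (j : ℕ) : Q.V :=
  lsrc (b.getD (j % b.length) (b.head hb))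

/-- The `j`-th letter of a cyclic word (indices mod the length). -/
def bLett {Q : FinQuiver} (b : List (Letter Q)) (hb : b ≠ []) (j : ℕ) : Letter Q :=
  b.getD (j % b.length) (b.head hb)

/-- Entry of the Jordan block of size `m` with eigenvalue `lam`. -/
noncomputable def jordEntry {K : Type} [Field K] (lam : K) {m : ℕ} (κ μ : Fin m) : K :=
  if κ = μ then lam else if (μ : ℕ) + 1 = (κ : ℕ) then 1 else 0

/-- The matrix entry of the action of the arrow `a` on a band module, from the basis vector
`z_j^μ` to the basis vector `z_k^κ`: all letters act by identity matrices except the last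
one, which acts by the Jordan block with eigenvalue `lam`. -/
noncomputable def bandEntry {Q : FinQuiver} (K : Type) [Field K] (b : List (Letter Q))
    (hb : b ≠ []) (lam : K) {m : ℕ} (a : Q.A) (k j : ℕ) (κ μ : Fin m) : K :=
  (if bLett b hb j = Sum.inl a ∧ (j + 1) % b.length = k % b.length then
    (if j % b.length + 1 = b.length then jordEntry lam κ μ else if κ = μ then 1 else 0)
   else 0)
  + (if bLett b hb k = Sum.inr a ∧ (k + 1) % b.length = j % b.length then
    (if k % b.length + 1 = b.length then jordEntry lam κ μ else if κ = μ then 1 else 0)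
   else 0)

/-- The band module `M(b, lam, m)`. -/
noncomputable def bandRep (K : Type) [Field K] (Q : FinQuiver) (b : List (Letter Q))
    (hb : b ≠ []) (lam : K) (m : ℕ) : QRep K Q where
  M i := (({j : Fin b.length // bVtx b hb j = i} × Fin m) → K)
  φ a := Matrix.mulVecLin
    (fun (p : {j : Fin b.length // bVtx b hb (j : ℕ) = Q.t a} × Fin m)
         (q : {j : Fin b.length // bVtx b hb (j : ℕ) = Q.s a} × Fin m) =>
      bandEntry K b hb lam a (p.1.1 : ℕ) (q.1.1 : ℕ) p.2 q.2)

/-- The quiver `Q_w` having the same shape as the walk `w`. -/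
@[reducible] def stringQuiver (Q : FinQuiver) (w : List (Letter Q)) : FinQuiver where
  V := Fin (w.length + 1)
  A := Fin w.length
  s j := match w.get j with
    | Sum.inl _ => j.castSucc
    | Sum.inr _ => j.succ
  t j := match w.get j with
    | Sum.inl _ => j.succ
    | Sum.inr _ => j.castSucc

/-- Cyclic successor in `Fin n`. -/
def cycSucc {n : ℕ} (j : Fin n) : Fin n := ⟨((j : ℕ) + 1) % n, Nat.mod_lt _ j.pos⟩

/-- The cyclic quiver `Q_b` having the same shape as the cyclic word `b`. -/
@[reducible] def bandQuiver (Q : FinQuiver) (b : List (Letter Q)) : FinQuiver where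
  V := Fin b.length
  A := Fin b.length
  s j := match b.get j with
    | Sum.inl _ => j
    | Sum.inr _ => cycSucc j
  t j := match b.get j with
    | Sum.inl _ => cycSucc j
    | Sum.inr _ => j

/-- A ray vector of a cone. -/
def IsRay {E : Type} [AddCommMonoid E] [Module ℝ E] (C : Set E) (u : E) : Prop :=
  u ∈ C ∧ u ≠ 0 ∧ ∀ x ∈ C, ∀ y ∈ C, u = x + y →
    (∃ c : ℝ, 0 ≤ c ∧ x = c • u) ∧ ∃ c : ℝ, 0 ≤ c ∧ y = c • u

/-- A minimal admissible sum: a nonzero non-negative combination of elements of `S` lying in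
the subspace `Rsub`, such that no nonzero non-negative combination supported on a proper
subset of its support lies in `Rsub`. -/
def IsMinAdmissibleSum {E : Type} [AddCommGroup E] [Module ℝ E] (Rsub : Set E)
    (S : Finset E) (x : E) : Prop :=
  ∃ lam : E → ℝ, (∀ s ∈ S, 0 ≤ lam s) ∧ x = ∑ s ∈ S, lam s • s ∧ x ∈ Rsub ∧ x ≠ 0 ∧
    ¬∃ mu : E → ℝ, (∀ s ∈ S, 0 ≤ mu s) ∧
      {s ∈ S | mu s ≠ 0} ⊂ {s ∈ S | lam s ≠ 0} ∧
      (∑ s ∈ S, mu s • s) ∈ Rsub ∧ (∑ s ∈ S, mu s • s) ≠ 0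

/-- The preorder induced by a walk `u` on the vertices: generated by `t(α) ≤ s(α)` over the
underlying arrows `α` of the letters of `u`. -/
def wordRel {Q : FinQuiver} (u : List (Letter Q)) : Q.V → Q.V → Prop :=
  Relation.ReflTransGen (fun x y => ∃ c ∈ u, Q.t (und c) = x ∧ Q.s (und c) = y)

/-- `v` is obtained from the cyclic word `b` by deleting one letter. -/
def DeleteOne {Q : FinQuiver} (b v : List (Letter Q)) : Prop :=
  ∃ (l₁ l₂ : List (Letter Q)) (c : Letter Q), b = l₁ ++ c :: l₂ ∧ v = l₂ ++ l₁

/-- The generating vector of the stability space of a thin band module attached to the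
`i`-th letter: `e_{v_i} - e_{v_{i+1}}` for a direct letter and its negative otherwise. -/
noncomputable def sVec {Q : FinQuiver} (b : List (Letter Q)) (hb : b ≠ []) (i : ℕ) :
    Q.V → ℝ :=
  if isDir (bLett b hb i) then
    Pi.single (bVtx b hb i) 1 - Pi.single (bVtx b hb (i + 1)) 1
  else Pi.single (bVtx b hb (i + 1)) 1 - Pi.single (bVtx b hb i) 1

/-- The set `S = {s_1, …, s_n}` of generating vectors. -/
def Sset {Q : FinQuiver} (b : List (Letter Q)) (hb : b ≠ []) : Set (Q.V → ℝ) :=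
  {u | ∃ i < b.length, u = sVec b hb i}

/-- The `g`-vector of the thin band module: the sum of the `s_i` over direct letters. -/
noncomputable def gVec {Q : FinQuiver} (b : List (Letter Q)) (hb : b ≠ []) : Q.V → ℝ :=
  ∑ i ∈ Finset.range b.length, if isDir (bLett b hb i) then sVec b hb i else 0

/-- The coefficient `ε_i` (for the mathematical index `i`, with letters `α_{i-1}`, `α_i`
at 0-based positions `i-2`, `i-1`). -/
noncomputable def epsCoef {Q : FinQuiver} (b : List (Letter Q)) (hb : b ≠ []) (i : ℕ) : ℝ :=
  if ¬isDir (bLett b hb (i - 2)) ∧ isDir (bLett b hb (i - 1)) then 1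
  else if isDir (bLett b hb (i - 2)) ∧ ¬isDir (bLett b hb (i - 1)) then -1
  else 0

/-- The vector `g_w` for `w = α_1 ⋯ α_m` (the `g`-vector of `M(w)`). -/
noncomputable def gwVec {Q : FinQuiver} (b : List (Letter Q)) (hb : b ≠ []) (m : ℕ) :
    Q.V → ℝ :=
  (if isDir (bLett b hb 0) then Pi.single (bVtx b hb 0) (1 : ℝ) else 0)
  + (if 1 ≤ m ∧ ¬isDir (bLett b hb (m - 1)) then Pi.single (bVtx b hb m) (1 : ℝ) else 0)
  + (if 1 ≤ m ∧ isDir (bLett b hb m) then -Pi.single (bVtx b hb (m + 1)) (1 : ℝ) else 0)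
  + (if isDir (bLett b hb (b.length - 1)) then -Pi.single (bVtx b hb (b.length - 1)) (1 : ℝ)
     else 0)
  + ∑ i ∈ Finset.Icc 2 m, epsCoef b hb i • (Pi.single (bVtx b hb (i - 1)) (1 : ℝ) : Q.V → ℝ)

/-- The vector `g_w'` for `w = α_1 ⋯ α_m` (equal to `-g^{M(w)ᵒᵖ}`). -/
noncomputable def gwVec' {Q : FinQuiver} (b : List (Letter Q)) (hb : b ≠ []) (m : ℕ) :
    Q.V → ℝ :=
  (if ¬isDir (bLett b hb 0) then -Pi.single (bVtx b hb 0) (1 : ℝ) else 0)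
  + (if 1 ≤ m ∧ isDir (bLett b hb (m - 1)) then -Pi.single (bVtx b hb m) (1 : ℝ) else 0)
  + (if 1 ≤ m ∧ ¬isDir (bLett b hb m) then Pi.single (bVtx b hb (m + 1)) (1 : ℝ) else 0)
  + (if ¬isDir (bLett b hb (b.length - 1)) then Pi.single (bVtx b hb (b.length - 1)) (1 : ℝ)
     else 0)
  + ∑ i ∈ Finset.Icc 2 m, epsCoef b hb i • (Pi.single (bVtx b hb (i - 1)) (1 : ℝ) : Q.V → ℝ)


/-!
The band module `N = M(b, λ, r)` degenerates to `M(v)^r`. Order the standard basis of `N` by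
the position of its vertex along `v`, counted from the end of the deleted letter (so that this
letter points from the top down), and then downwards along the Jordan block. For a
subrepresentation `L` of `N`, the leading coordinates of the elements of `L` at a vertex are
as many as the dimension of `L` there, and every letter of `v` carries the leading coordinate
of a vector to the leading coordinate of its image. So for each Jordan level the leading
coordinates span a coordinate subrepresentation of `M(v)`, and `⟨θ, dim L⟩` is a sum of `r`
values `⟨θ, dim U⟩ ≤ 0` when `M(v)` is `θ`-semistable, while `dim N = r · dim M(v)`.
-/

section LeadingCoord

open Matrix

variable {K : Type} [Field K] {X Y α : Type} [LinearOrder α]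

def IsLeadingCoord (L : Submodule K (X → K)) (h : X → α) (s : X) : Prop :=
  ∃ x ∈ L, x s ≠ 0 ∧ ∀ t, x t ≠ 0 → h t ≤ h s

lemma exists_isLeadingCoord [Fintype X] {L : Submodule K (X → K)} (h : X → α) {x : X → K}
    (hx : x ∈ L) (hx0 : x ≠ 0) : ∃ s, x s ≠ 0 ∧ IsLeadingCoord L h s := by
  obtain ⟨s₁, hs₁⟩ := Function.ne_iff.mp hx0
  obtain ⟨s, hs, hmax⟩ :=
    Finset.exists_max_image {t | x t ≠ 0} h ⟨s₁, by simpa using hs₁⟩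
  exact ⟨s, by simpa using hs, x, hx, by simpa using hs, fun t ht => hmax t (by simpa using ht)⟩

lemma IsLeadingCoord.mulVec [Fintype X] {L : Submodule K (X → K)} {L' : Submodule K (Y → K)}
    {A : Matrix Y X K} (hA : ∀ x ∈ L, A *ᵥ x ∈ L') {hX : X → α} {hY : Y → α}
    {s₀ : X} {t₀ : Y}
    (hs₀ : IsLeadingCoord L hX s₀) (hdiag : A t₀ s₀ ≠ 0)
    (hmono : ∀ s t, A t s ≠ 0 → hX s ≤ hX s₀ → hY t ≤ hY t₀)
    (htri : ∀ s, A t₀ s ≠ 0 → s ≠ s₀ → hX s₀ < hX s) :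
    IsLeadingCoord L' hY t₀ := by
  obtain ⟨x, hxL, hx0, hxmax⟩ := hs₀
  refine ⟨A *ᵥ x, hA x hxL, ?_, fun t ht => ?_⟩
  · rw [Matrix.mulVec, dotProduct, Finset.sum_eq_single s₀ (fun s _ hs => ?_) (by simp)]
    · exact mul_ne_zero hdiag hx0
    · by_contra hne
      exact (htri s (left_ne_zero_of_mul hne) hs).not_ge (hxmax s (right_ne_zero_of_mul hne))
  · obtain ⟨s, -, hst⟩ := Finset.exists_ne_zero_of_sum_ne_zero ht
    exact hmono s t (left_ne_zero_of_mul hst) (hxmax s (right_ne_zero_of_mul hst))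

/-- Restriction to the leading coordinates is injective on `L`, and witnesses for them are
triangular, hence linearly independent. -/
theorem finrank_eq_card_isLeadingCoord [Fintype X] (L : Submodule K (X → K)) {h : X → α}
    (hinj : Function.Injective h) :
    Module.finrank K L = Fintype.card {s // IsLeadingCoord L h s} := by
  choose c hcL hc0 hcmax using fun s : {s // IsLeadingCoord L h s} => s.2
  apply le_antisymm
  · let restr : L →ₗ[K] ({s // IsLeadingCoord L h s} → K) :=
      { toFun := fun x s => x.1 s
        map_add' := fun _ _ => rfl
        map_smul' := fun _ _ => rfl }
    have hrestr : Function.Injective restr := by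
      rw [← LinearMap.ker_eq_bot, Submodule.eq_bot_iff]
      intro x hx
      by_contra hx0
      obtain ⟨s, hs, hlead⟩ := exists_isLeadingCoord h x.2 (by simpa using hx0)
      exact hs (congrFun hx ⟨s, hlead⟩)
    simpa using LinearMap.finrank_le_finrank_of_injective hrestr
  · have hind : LinearIndependent K c := by
      rw [Fintype.linearIndependent_iff]
      intro g hg
      by_contra! hne
      obtain ⟨i, hi, hmax⟩ := Finset.exists_max_image {i | g i ≠ 0} (fun i => h i.1)
        (by simpa [Finset.Nonempty] using hne)
      have hgi : g i ≠ 0 := by simpa using hi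
      have hsum := congrFun hg i.1
      rw [Finset.sum_apply, Finset.sum_eq_single i (fun j _ hji => ?_) (by simp)] at hsum
      · exact mul_ne_zero hgi (hc0 i) (by simpa using hsum)
      · by_cases hgj : g j = 0
        · simp [hgj]
        by_cases hcj : c j i.1 = 0
        · simp [hcj]
        exact absurd (Subtype.ext (hinj ((hmax j (by simpa using hgj)).antisymm
          (hcmax j i.1 hcj)))) hji
    have hind' : LinearIndependent K fun s => (⟨c s, hcL s⟩ : L) :=
      LinearIndependent.of_comp L.subtype hind
    exact hind'.fintype_card_le_finrank

end LeadingCoord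

section CyclicWord

variable {Q : FinQuiver}

theorem wordComposable_iff_isChain :
    ∀ {l : List (Letter Q)}, WordComposable l ↔ l.IsChain fun c d => ltgt c = lsrc d
  | [] => by simp [WordComposable]
  | [_] => by simp [WordComposable]
  | c :: d :: l => by rw [List.isChain_cons_cons, ← wordComposable_iff_isChain]; rfl

theorem wordReduced_iff_isChain :
    ∀ {l : List (Letter Q)}, WordReduced l ↔ l.IsChain fun c d => d ≠ linv c
  | [] => by simp [WordReduced]
  | [_] => by simp [WordReduced]
  | c :: d :: l => by rw [List.isChain_cons_cons, ← wordReduced_iff_isChain]; rfl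

variable {b : List (Letter Q)} (hb : b ≠ [])

lemma bLett_eq_getElem (j : ℕ) :
    bLett b hb j = b[j % b.length]'(Nat.mod_lt _ (List.length_pos_iff.mpr hb)) :=
  List.getD_eq_getElem _ _ _

lemma bVtx_eq_lsrc (j : ℕ) : bVtx b hb j = lsrc (bLett b hb j) := rfl

lemma bLett_mod (j : ℕ) : bLett b hb (j % b.length) = bLett b hb j := by
  simp only [bLett, Nat.mod_mod]

lemma bVtx_mod (j : ℕ) : bVtx b hb (j % b.length) = bVtx b hb j := by
  simp only [bVtx, Nat.mod_mod]

lemma getElem_append_self_eq_bLett {k : ℕ} (hk : k < (b ++ b).length) :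
    (b ++ b)[k] = bLett b hb k := by
  rw [bLett_eq_getElem]
  rcases lt_or_ge k b.length with h | h
  · simp only [List.getElem_append_left h, Nat.mod_eq_of_lt h]
  · simp only [List.length_append] at hk
    simp only [List.getElem_append_right h, Nat.mod_eq_sub_mod h,
      Nat.mod_eq_of_lt (by omega : k - b.length < b.length)]

lemma List.IsChain.bLett_succ {R : Letter Q → Letter Q → Prop} (h : (b ++ b).IsChain R)
    (j : ℕ) :
    R (bLett b hb j) (bLett b hb (j + 1)) := by
  have hj := Nat.mod_lt j (List.length_pos_iff.mpr hb)
  have := h.getElem (j % b.length) (by simp only [List.length_append]; omega)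
  rwa [getElem_append_self_eq_bLett hb, getElem_append_self_eq_bLett hb, bLett_mod,
    show bLett b hb (j % b.length + 1) = bLett b hb (j + 1) by simp only [bLett, Nat.mod_add_mod]]
    at this

variable {hb}

lemma ltgt_bLett (hcomp : WordComposable (b ++ b)) (j : ℕ) :
    ltgt (bLett b hb j) = bVtx b hb (j + 1) :=
  (wordComposable_iff_isChain.mp hcomp).bLett_succ hb j

lemma bLett_succ_ne_linv (hred : WordReduced (b ++ b)) (j : ℕ) :
    bLett b hb (j + 1) ≠ linv (bLett b hb j) :=
  (wordReduced_iff_isChain.mp hred).bLett_succ hb j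

end CyclicWord

section BandModule

variable {K : Type} [Field K] {Q : FinQuiver} {b : List (Letter Q)} {hb : b ≠ []}

variable (b hb) in
def bandSrc (e : ℕ) : ℕ :=
  match bLett b hb e with
  | .inl _ => e
  | .inr _ => (e + 1) % b.length

variable (b hb) in
def bandTgt (e : ℕ) : ℕ :=
  match bLett b hb e with
  | .inl _ => (e + 1) % b.length
  | .inr _ => e

lemma bandSrc_lt {e : ℕ} (he : e < b.length) : bandSrc b hb e < b.length := by
  unfold bandSrc; split
  exacts [he, Nat.mod_lt _ (by omega)]

lemma bandTgt_lt {e : ℕ} (he : e < b.length) : bandTgt b hb e < b.length := by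
  unfold bandTgt; split
  exacts [Nat.mod_lt _ (by omega), he]

lemma bVtx_bandSrc (hcomp : WordComposable (b ++ b)) (e : ℕ) :
    bVtx b hb (bandSrc b hb e) = Q.s (und (bLett b hb e)) := by
  have := ltgt_bLett (hb := hb) hcomp e
  unfold bandSrc
  split <;> rename_i h
  · rw [bVtx_eq_lsrc, h]; rfl
  · simp_all [bVtx_mod, ltgt, und]

lemma bVtx_bandTgt (hcomp : WordComposable (b ++ b)) (e : ℕ) :
    bVtx b hb (bandTgt b hb e) = Q.t (und (bLett b hb e)) := by
  have := ltgt_bLett (hb := hb) hcomp e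
  unfold bandTgt
  split <;> rename_i h
  · simp_all [bVtx_mod, ltgt, und]
  · rw [bVtx_eq_lsrc, h]; rfl

lemma eq_of_add_one_mod_eq {n e e' : ℕ} (he : e < n) (he' : e' < n)
    (h : (e + 1) % n = (e' + 1) % n) : e = e' :=
  (Nat.ModEq.add_right_cancel' 1 h).eq_of_lt_of_lt he he'

lemma bandSrc_injOn (hred : WordReduced (b ++ b)) {e e' : ℕ} (he : e < b.length)
    (he' : e' < b.length) (hund : und (bLett b hb e) = und (bLett b hb e'))
    (h : bandSrc b hb e = bandSrc b hb e') : e = e' := by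
  have hred' := bLett_succ_ne_linv (hb := hb) hred
  rcases hc : bLett b hb e with a | a <;> rcases hc' : bLett b hb e' with a' | a' <;>
    simp only [bandSrc, hc, hc', und] at h hund
  · exact h
  · exact absurd (by rw [← bLett_mod, ← h, hc, hc', hund]; rfl) (hred' e')
  · exact absurd (by rw [← bLett_mod, h, hc, hc', hund]; rfl) (hred' e)
  · exact eq_of_add_one_mod_eq he he' h

lemma bandTgt_injOn (hred : WordReduced (b ++ b)) {e e' : ℕ} (he : e < b.length)
    (he' : e' < b.length) (hund : und (bLett b hb e) = und (bLett b hb e'))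
    (h : bandTgt b hb e = bandTgt b hb e') : e = e' := by
  have hred' := bLett_succ_ne_linv (hb := hb) hred
  rcases hc : bLett b hb e with a | a <;> rcases hc' : bLett b hb e' with a' | a' <;>
    simp only [bandTgt, hc, hc', und] at h hund
  · exact eq_of_add_one_mod_eq he he' h
  · exact absurd (by rw [← bLett_mod, h, hc, hc', hund]; rfl) (hred' e)
  · exact absurd (by rw [← bLett_mod, ← h, hc, hc', hund]; rfl) (hred' e')
  · exact h

lemma eq_or_succ_eq_of_ite_jordEntry_ne_zero {lam : K} {r : ℕ} {κ ν : Fin r} {c : Prop}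
    [Decidable c] (h : (if c then jordEntry lam κ ν else if κ = ν then (1 : K) else 0) ≠ 0) :
    κ = ν ∨ (c ∧ (ν : ℕ) + 1 = κ) := by
  unfold jordEntry at h
  split_ifs at h <;> simp_all

lemma exists_of_bandEntry_ne_zero (hred : WordReduced (b ++ b)) {lam : K} {r : ℕ} {a : Q.A}
    {j k : ℕ} (hj : j < b.length) (hk : k < b.length) {κ ν : Fin r}
    (h : bandEntry K b hb lam a k j κ ν ≠ 0) :
    ∃ e < b.length, und (bLett b hb e) = a ∧ bandSrc b hb e = j ∧ bandTgt b hb e = k ∧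
      (κ = ν ∨ (e + 1 = b.length ∧ (ν : ℕ) + 1 = κ)) := by
  unfold bandEntry at h
  rw [Nat.mod_eq_of_lt hj, Nat.mod_eq_of_lt hk] at h
  by_cases h₁ : bLett b hb j = .inl a ∧ (j + 1) % b.length = k
  · have h₂ : ¬(bLett b hb k = .inr a ∧ (k + 1) % b.length = j) := fun h₂ =>
      bLett_succ_ne_linv hred j (by rw [← bLett_mod, h₁.2, h₂.1, h₁.1]; rfl)
    rw [if_pos h₁, if_neg h₂, add_zero] at h
    exact ⟨j, hj, by simp [h₁.1, und], by simp [bandSrc, h₁.1],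
      by simp [bandTgt, h₁.1, h₁.2], eq_or_succ_eq_of_ite_jordEntry_ne_zero h⟩
  · rw [if_neg h₁, zero_add] at h
    by_cases h₂ : bLett b hb k = .inr a ∧ (k + 1) % b.length = j
    · rw [if_pos h₂] at h
      exact ⟨k, hk, by simp [h₂.1, und], by simp [bandSrc, h₂.1, h₂.2],
        by simp [bandTgt, h₂.1], eq_or_succ_eq_of_ite_jordEntry_ne_zero h⟩
    · exact absurd (if_neg h₂) h

lemma bandEntry_bandTgt_bandSrc_ne_zero (hred : WordReduced (b ++ b)) {lam : K} (hlam : lam ≠ 0)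
    {r : ℕ} {e : ℕ} (he : e < b.length) (μ : Fin r) :
    bandEntry K b hb lam (und (bLett b hb e)) (bandTgt b hb e) (bandSrc b hb e) μ μ ≠ 0 := by
  have hred' := bLett_succ_ne_linv (hb := hb) hred e
  unfold bandEntry
  rcases hc : bLett b hb e with a | a <;> simp only [hc, linv] at hred' <;>
    simp only [bandSrc, bandTgt, hc, und, Nat.mod_mod, Nat.mod_eq_of_lt he, bLett_mod, hred',
      and_true, false_and, if_true, if_false, add_zero, zero_add] <;>
    split_ifs <;> simp [jordEntry, hlam]

end BandModule

section Cut

/-- The position of the band index `j` along the string obtained from a cyclic word of length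
`n` by deleting its `p`-th letter; that string starts at band index `p + 1` and ends at `p`. -/
def cutPos (n p j : ℕ) : ℕ := (j + (n - 1 - p)) % n

variable {n p : ℕ}

lemma cutPos_lt (hn : 0 < n) (j : ℕ) : cutPos n p j < n := Nat.mod_lt _ hn

lemma cutPos_injOn {j k : ℕ} (hj : j < n) (hk : k < n) (h : cutPos n p j = cutPos n p k) :
    j = k :=
  (Nat.ModEq.add_right_cancel' _ h).eq_of_lt_of_lt hj hk

lemma cutPos_add_one_add_mod (hp : p < n) {q : ℕ} (hq : q < n) :
    cutPos n p ((p + 1 + q) % n) = q := by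
  rw [cutPos, Nat.mod_add_mod, show p + 1 + q + (n - 1 - p) = q + n by omega, Nat.add_mod_right,
    Nat.mod_eq_of_lt hq]

lemma add_one_add_cutPos_mod (hp : p < n) {j : ℕ} (hj : j < n) :
    (p + 1 + cutPos n p j) % n = j := by
  rw [cutPos, Nat.add_mod_mod, show p + 1 + (j + (n - 1 - p)) = j + n by omega,
    Nat.add_mod_right, Nat.mod_eq_of_lt hj]

lemma cutPos_self (hp : p < n) : cutPos n p p = n - 1 := by
  rw [cutPos, show p + (n - 1 - p) = n - 1 by omega, Nat.mod_eq_of_lt (by omega)]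

lemma cutPos_succ (hp : p < n) {e : ℕ} (he : e < n) (hep : e ≠ p) :
    cutPos n p ((e + 1) % n) = cutPos n p e + 1 := by
  have hq := cutPos_lt (n := n) (p := p) (by omega) e
  have hq' : cutPos n p e ≠ n - 1 := fun h =>
    hep (cutPos_injOn he hp (h.trans (cutPos_self hp).symm))
  conv_lhs => rw [← add_one_add_cutPos_mod hp he, Nat.mod_add_mod, add_assoc]
  exact cutPos_add_one_add_mod hp (by omega)

end Cut

section CutHeight

variable {Q : FinQuiver} {b : List (Letter Q)} {hb : b ≠ []} {p : ℕ}

variable (b hb) in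
/-- Positions along the string obtained by deleting the `p`-th letter, counted from the end of
that letter, so that the deleted letter points from the top down. -/
def cutHeight (p j : ℕ) : ℕ :=
  match bLett b hb p with
  | .inl _ => cutPos b.length p j
  | .inr _ => b.length - 1 - cutPos b.length p j

lemma cutHeight_injOn {j k : ℕ} (hj : j < b.length) (hk : k < b.length)
    (h : cutHeight b hb p j = cutHeight b hb p k) : j = k := by
  have := cutPos_lt (n := b.length) (p := p) (by omega) j
  have := cutPos_lt (n := b.length) (p := p) (by omega) k
  refine cutPos_injOn (p := p) hj hk ?_
  unfold cutHeight at h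
  split at h <;> omega

lemma cutHeight_bandTgt_self (hp : p < b.length) : cutHeight b hb p (bandTgt b hb p) = 0 := by
  unfold cutHeight bandTgt
  split
  · simpa using cutPos_add_one_add_mod hp (q := 0) (by omega)
  · rw [cutPos_self hp]; omega

/-- Every letter but the deleted one changes the height by one, and the deleted one ends at
height `0`. -/
lemma cutHeight_bandTgt_lt (hred : WordReduced (b ++ b)) (hp : p < b.length) {e e' : ℕ}
    (he : e < b.length) (he' : e' < b.length) (hep : e ≠ p) (hne : e' ≠ e)
    (hund : und (bLett b hb e') = und (bLett b hb e))
    (hlt : cutHeight b hb p (bandSrc b hb e') < cutHeight b hb p (bandSrc b hb e)) :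
    cutHeight b hb p (bandTgt b hb e') < cutHeight b hb p (bandTgt b hb e) := by
  have htgt : cutHeight b hb p (bandTgt b hb e') ≠ cutHeight b hb p (bandTgt b hb e) :=
    fun h => hne (bandTgt_injOn hred he' he hund (cutHeight_injOn (bandTgt_lt he')
      (bandTgt_lt he) h))
  by_cases he'p : e' = p
  · subst he'p
    rw [cutHeight_bandTgt_self hp] at htgt ⊢
    omega
  have hσ : cutPos b.length p e ≠ cutPos b.length p e' :=
    fun h => hne (cutPos_injOn he' he h.symm)
  have := cutPos_succ hp he hep
  have := cutPos_succ hp he' he'p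
  have := cutPos_lt (n := b.length) (p := p) (by omega) ((e + 1) % b.length)
  have := cutPos_lt (n := b.length) (p := p) (by omega) ((e' + 1) % b.length)
  rcases hc : bLett b hb p <;> rcases hce : bLett b hb e <;> rcases hce' : bLett b hb e' <;>
    simp only [cutHeight, bandSrc, bandTgt, hc, hce, hce'] at hlt htgt ⊢ <;> omega

end CutHeight

section LeadingBandCoord

variable {K : Type} [Field K] {Q : FinQuiver} {b : List (Letter Q)} {hb : b ≠ []} {lam : K}
  {p r : ℕ}

variable (b hb p r) in
/-- Higher Jordan levels count as lower, since the Jordan block adds to the image of level `ν`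
a term at level `ν + 1`. -/
def bandHeight (i : Q.V) (s : {j : Fin b.length // bVtx b hb j = i} × Fin r) : ℕ ×ₗ ℕ :=
  toLex (cutHeight b hb p s.1.1, r - s.2)

lemma bandHeight_injective (i : Q.V) :
    Function.Injective (bandHeight b hb p r i) := by
  rintro ⟨⟨j, hj⟩, μ⟩ ⟨⟨k, hk⟩, κ⟩ h
  simp only [bandHeight, toLex_inj, Prod.mk.injEq] at h
  obtain rfl : j = k := Fin.ext (cutHeight_injOn j.2 k.2 h.1)
  obtain rfl : μ = κ := Fin.ext (by omega)
  rfl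

def IsLeadingBandCoord (N : QSubRep (bandRep K Q b hb lam r)) (p j : ℕ) (μ : Fin r) : Prop :=
  ∃ hj : j < b.length,
    IsLeadingCoord (N.L (bVtx b hb j)) (bandHeight b hb p r _) ⟨⟨⟨j, hj⟩, rfl⟩, μ⟩

lemma isLeadingBandCoord_iff (N : QSubRep (bandRep K Q b hb lam r)) {i : Q.V}
    (j : Fin b.length) (hj : bVtx b hb j = i) (μ : Fin r) :
    IsLeadingBandCoord N p j μ ↔
      IsLeadingCoord (N.L i) (bandHeight b hb p r i) ⟨⟨j, hj⟩, μ⟩ := by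
  subst hj
  exact ⟨fun ⟨_, h⟩ => h, fun h => ⟨j.2, h⟩⟩

theorem IsLeadingBandCoord.bandTgt (hcomp : WordComposable (b ++ b))
    (hred : WordReduced (b ++ b)) (hlam : lam ≠ 0) (hp : p < b.length)
    {N : QSubRep (bandRep K Q b hb lam r)} {e : ℕ} (he : e < b.length) (hep : e ≠ p)
    {μ : Fin r}
    (h : IsLeadingBandCoord N p (bandSrc b hb e) μ) :
    IsLeadingBandCoord N p (bandTgt b hb e) μ := by
  rw [isLeadingBandCoord_iff N ⟨_, bandSrc_lt he⟩ (bVtx_bandSrc hcomp e)] at h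
  rw [isLeadingBandCoord_iff N ⟨_, bandTgt_lt he⟩ (bVtx_bandTgt hcomp e)]
  refine h.mulVec (fun x hx => N.compat _ x hx)
    (bandEntry_bandTgt_bandSrc_ne_zero hred hlam he μ) ?_ ?_
  · rintro ⟨⟨j, hj⟩, ν⟩ ⟨⟨k, hk⟩, κ⟩ hA hle
    obtain ⟨e', he', hund, hsrc, htgt, hκ⟩ := exists_of_bandEntry_ne_zero hred j.2 k.2 hA
    simp only [bandHeight, Prod.Lex.toLex_le_toLex, ← hsrc, ← htgt] at hle ⊢
    by_cases he'e : e' = e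
    · subst he'e
      simp only [Fin.ext_iff] at hκ
      omega
    have hsrc_ne : cutHeight b hb p (bandSrc b hb e') ≠ cutHeight b hb p (bandSrc b hb e) :=
      fun h => he'e (bandSrc_injOn hred he' he hund
        (cutHeight_injOn (bandSrc_lt he') (bandSrc_lt he) h))
    exact Or.inl (cutHeight_bandTgt_lt hred hp he he' hep he'e hund (by omega))
  · rintro ⟨⟨j, hj⟩, ν⟩ hA hne
    obtain ⟨e', he', hund, hsrc, htgt, hκ⟩ :=
      exists_of_bandEntry_ne_zero hred j.2 (bandTgt_lt he) hA
    obtain rfl := bandTgt_injOn hred he' he hund htgt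
    have hνμ : ν ≠ μ := fun h => hne (by subst h; congr; exact Fin.ext hsrc.symm)
    simp only [bandHeight, Prod.Lex.toLex_lt_toLex, ← hsrc, lt_self_iff_false, true_and,
      false_or]
    rw [Ne, Fin.ext_iff] at hνμ
    simp only [Fin.ext_iff] at hκ
    omega

end LeadingBandCoord

section CoordSubmodule

open Matrix

variable {K : Type} [Field K] {X Y : Type}

variable (K) in
def coordSubmodule (P : X → Prop) : Submodule K (X → K) :=
  LinearMap.ker (LinearMap.funLeft K K ((↑) : {s // ¬P s} → X))

lemma mem_coordSubmodule {P : X → Prop} {x : X → K} :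
    x ∈ coordSubmodule K P ↔ ∀ s, ¬P s → x s = 0 := by
  simp [coordSubmodule, funext_iff, LinearMap.funLeft_apply]

lemma finrank_coordSubmodule [Fintype X] (P : X → Prop) :
    Module.finrank K (coordSubmodule K P) = Fintype.card {s // P s} := by
  have := (LinearMap.funLeft K K ((↑) : {s // ¬P s} → X)).finrank_range_add_finrank_ker
  rw [LinearMap.range_eq_top.mpr (LinearMap.funLeft_surjective_of_injective _ _ _
    Subtype.val_injective), finrank_top, Module.finrank_fintype_fun_eq_card,
    Module.finrank_fintype_fun_eq_card, Fintype.card_subtype_compl] at this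
  have := Fintype.card_subtype_le P
  rw [coordSubmodule]
  omega

lemma mulVec_mem_coordSubmodule [Fintype X] {P : X → Prop} {P' : Y → Prop} {A : Matrix Y X K}
    (hA : ∀ s t, A t s ≠ 0 → P s → P' t) {x : X → K} (hx : x ∈ coordSubmodule K P) :
    A *ᵥ x ∈ coordSubmodule K P' := by
  rw [mem_coordSubmodule] at hx ⊢
  refine fun t ht => Finset.sum_eq_zero fun s _ => ?_
  by_cases hs : P s
  · by_cases hts : A t s = 0
    · simp [hts]
    · exact absurd (hA s t hts hs) ht
  · simp [hx s hs]

end CoordSubmodule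

noncomputable def stringCoordSubRep (K : Type) [Field K] {Q : FinQuiver} (w : List (Letter Q))
    (hw : w ≠ []) (P : ℕ → Prop) (hP : ∀ a x y, stepsTo w a x y → P x → P y) :
    QSubRep (stringRep K Q w hw) where
  L i := coordSubmodule K fun q : {j : Fin (w.length + 1) // wVtx w hw j = i} => P q.1
  compat a _ hx := mulVec_mem_coordSubmodule (fun s t hst => hP a s.1 t.1 (by
    by_contra h
    exact hst (if_neg h))) hx

lemma finrank_stringCoordSubRep {K : Type} [Field K] {Q : FinQuiver} {w : List (Letter Q)}
    {hw : w ≠ []} {P : ℕ → Prop} {hP : ∀ a x y, stepsTo w a x y → P x → P y} (i : Q.V) :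
    Module.finrank K ((stringCoordSubRep K w hw P hP).L i) =
      Fintype.card {q : {j : Fin (w.length + 1) // wVtx w hw j = i} // P q.1} :=
  finrank_coordSubmodule _

section CutString

variable {Q : FinQuiver} {l₁ l₂ : List (Letter Q)} {c : Letter Q}
  (hb : l₁ ++ c :: l₂ ≠ [])

lemma length_cut : (l₁ ++ c :: l₂).length = (l₂ ++ l₁).length + 1 := by
  simp only [List.length_append, List.length_cons]
  omega

lemma getElem_cut {q : ℕ} (hq : q < (l₂ ++ l₁).length) :
    (l₂ ++ l₁)[q] = bLett (l₁ ++ c :: l₂) hb (l₁.length + 1 + q) := by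
  have hrot : (l₁ ++ c :: l₂).rotate (l₁.length + 1) = l₂ ++ l₁ ++ [c] := by
    rw [List.rotate_eq_drop_append_take (by simp)]
    simp [List.drop_append, List.take_append, List.drop_eq_nil_of_le, List.take_of_length_le]
  rw [bLett_eq_getElem, ← List.getElem_append_left (as := l₂ ++ l₁) (bs := [c]) hq]
  · simp only [← hrot, List.getElem_rotate, add_comm q]
  · simp only [List.length_append, List.length_singleton] at hq ⊢
    omega

variable {hb}

lemma wVtx_cut (hcomp : WordComposable ((l₁ ++ c :: l₂) ++ (l₁ ++ c :: l₂)))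
    (hv : l₂ ++ l₁ ≠ []) {q : ℕ} (hq : q ≤ (l₂ ++ l₁).length) :
    wVtx (l₂ ++ l₁) hv q = bVtx (l₁ ++ c :: l₂) hb (l₁.length + 1 + q) := by
  have hv' := List.length_pos_iff.mpr hv
  unfold wVtx
  split_ifs with hq0
  · rw [hq0, List.head_eq_getElem, getElem_cut hb hv', add_zero, bVtx_eq_lsrc]
  · rw [List.getD_eq_getElem _ _ (by omega), getElem_cut hb (by omega), ltgt_bLett hcomp]
    congr 1
    omega

def cutEquiv (hcomp : WordComposable ((l₁ ++ c :: l₂) ++ (l₁ ++ c :: l₂)))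
    (hv : l₂ ++ l₁ ≠ []) (i : Q.V) :
    {q : Fin ((l₂ ++ l₁).length + 1) // wVtx (l₂ ++ l₁) hv q = i} ≃
      {j : Fin (l₁ ++ c :: l₂).length // bVtx (l₁ ++ c :: l₂) hb j = i} where
  toFun q := ⟨⟨(l₁.length + 1 + q) % (l₁ ++ c :: l₂).length, Nat.mod_lt _ (by simp)⟩, by
    rw [bVtx_mod, ← wVtx_cut hcomp hv (by omega), q.2]⟩
  invFun j :=
    have := cutPos_lt (n := (l₁ ++ c :: l₂).length) (p := l₁.length) (by simp) j
    have := length_cut (l₁ := l₁) (l₂ := l₂) (c := c)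
    ⟨⟨cutPos (l₁ ++ c :: l₂).length l₁.length j, by omega⟩, by
      rw [wVtx_cut (hb := hb) hcomp hv (by dsimp only; omega), ← bVtx_mod hb,
        add_one_add_cutPos_mod (by simp) j.1.2, j.2]⟩
  left_inv q := by
    ext
    exact cutPos_add_one_add_mod (by simp) (by rw [length_cut]; exact q.1.2)
  right_inv j := by
    ext
    exact add_one_add_cutPos_mod (by simp) j.1.2

lemma exists_letter_of_stepsTo {a : Q.A} {x y : ℕ} (h : stepsTo (l₂ ++ l₁) a x y) :
    ∃ e < (l₁ ++ c :: l₂).length, e ≠ l₁.length ∧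
      bandSrc (l₁ ++ c :: l₂) hb e = (l₁.length + 1 + x) % (l₁ ++ c :: l₂).length ∧
      bandTgt (l₁ ++ c :: l₂) hb e = (l₁.length + 1 + y) % (l₁ ++ c :: l₂).length := by
  have hp : l₁.length < (l₁ ++ c :: l₂).length := by simp
  have hne {q : ℕ} (hq : q < (l₂ ++ l₁).length) :
      (l₁.length + 1 + q) % (l₁ ++ c :: l₂).length ≠ l₁.length := fun h => by
    have := cutPos_add_one_add_mod hp (q := q) (by rw [length_cut]; omega)
    rw [h, cutPos_self hp, length_cut] at this
    omega
  rcases h with ⟨rfl, hx⟩ | ⟨rfl, hy⟩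
  · obtain ⟨hxlt, hxv⟩ := List.getElem?_eq_some_iff.mp hx
    have hlet : bLett _ hb ((l₁.length + 1 + x) % (l₁ ++ c :: l₂).length) = .inl a := by
      rw [bLett_mod, ← getElem_cut hb hxlt, hxv]
    refine ⟨_, Nat.mod_lt _ (by omega), hne hxlt, by simp only [bandSrc, hlet], ?_⟩
    simp only [bandTgt, hlet]
    simp only [Nat.mod_add_mod, add_assoc]
  · obtain ⟨hylt, hyv⟩ := List.getElem?_eq_some_iff.mp hy
    have hlet : bLett _ hb ((l₁.length + 1 + y) % (l₁ ++ c :: l₂).length) = .inr a := by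
      rw [bLett_mod, ← getElem_cut hb hylt, hyv]
    refine ⟨_, Nat.mod_lt _ (by omega), hne hylt, ?_, by simp only [bandTgt, hlet]⟩
    simp only [bandSrc, hlet]
    simp only [Nat.mod_add_mod, add_assoc]

end CutString

lemma Fintype.card_subtype_prod {A B : Type} [Fintype A] [Fintype B] (P : A × B → Prop) :
    Fintype.card {s // P s} = ∑ μ : B, Fintype.card {a // P (a, μ)} := by
  rw [← Fintype.card_sigma]
  exact Fintype.card_congr
    { toFun s := ⟨s.1.2, s.1.1, s.2⟩
      invFun t := ⟨(t.2.1, t.1), t.2.2⟩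
      left_inv _ := rfl
      right_inv _ := rfl }

lemma stabInner_natCast_mul {Q : FinQuiver} (θ : Q.V → ℝ) (m : ℕ) (d : Q.V → ℕ) :
    stabInner θ (fun i => m * d i) = m * stabInner θ d := by
  simp only [stabInner, Finset.mul_sum, Nat.cast_mul]
  exact Finset.sum_congr rfl fun _ _ => by ring

lemma stabInner_sum {Q : FinQuiver} {ι : Type} (θ : Q.V → ℝ) (s : Finset ι)
    (d : ι → Q.V → ℕ) :
    stabInner θ (fun i => ∑ μ ∈ s, d μ i) = ∑ μ ∈ s, stabInner θ (d μ) := by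
  simp only [stabInner, Nat.cast_sum, Finset.mul_sum]
  exact Finset.sum_comm

section DeletedString

variable {K : Type} [Field K] {Q : FinQuiver} {l₁ l₂ : List (Letter Q)} {c : Letter Q}
  {hb : l₁ ++ c :: l₂ ≠ []} {lam : K} {r : ℕ}

lemma IsLeadingBandCoord.of_stepsTo
    (hcomp : WordComposable ((l₁ ++ c :: l₂) ++ (l₁ ++ c :: l₂)))
    (hred : WordReduced ((l₁ ++ c :: l₂) ++ (l₁ ++ c :: l₂))) (hlam : lam ≠ 0)
    {N : QSubRep (bandRep K Q (l₁ ++ c :: l₂) hb lam r)} {μ : Fin r} {a : Q.A} {x y : ℕ}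
    (h : stepsTo (l₂ ++ l₁) a x y)
    (hx :
      IsLeadingBandCoord N l₁.length ((l₁.length + 1 + x) % (l₁ ++ c :: l₂).length) μ) :
    IsLeadingBandCoord N l₁.length ((l₁.length + 1 + y) % (l₁ ++ c :: l₂).length) μ := by
  obtain ⟨e, he, hep, hsrc, htgt⟩ := exists_letter_of_stepsTo (hb := hb) h
  rw [← htgt]
  rw [← hsrc] at hx
  exact hx.bandTgt hcomp hred hlam (by simp) he hep

lemma finrank_eq_sum_card_isLeadingBandCoord
    (hcomp : WordComposable ((l₁ ++ c :: l₂) ++ (l₁ ++ c :: l₂))) (hv : l₂ ++ l₁ ≠ [])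
    (N : QSubRep (bandRep K Q (l₁ ++ c :: l₂) hb lam r)) (i : Q.V) :
    Module.finrank K (N.L i) = ∑ μ : Fin r,
      Fintype.card {q : {q : Fin ((l₂ ++ l₁).length + 1) // wVtx (l₂ ++ l₁) hv q = i} //
        IsLeadingBandCoord N l₁.length ((l₁.length + 1 + q.1) % (l₁ ++ c :: l₂).length)
          μ} := by
  refine (finrank_eq_card_isLeadingCoord (N.L i)
    (bandHeight_injective (p := l₁.length) i)).trans ?_
  rw [Fintype.card_subtype_prod]
  exact Finset.sum_congr rfl fun μ _ => Fintype.card_congr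
    ((cutEquiv hcomp hv i).subtypeEquiv fun q =>
      isLeadingBandCoord_iff N (cutEquiv hcomp hv i q).1 (cutEquiv hcomp hv i q).2 μ).symm

lemma dimVec_bandRep_cut (hcomp : WordComposable ((l₁ ++ c :: l₂) ++ (l₁ ++ c :: l₂)))
    (hv : l₂ ++ l₁ ≠ []) :
    (bandRep K Q (l₁ ++ c :: l₂) hb lam r).dimVec =
      fun i => r * (stringRep K Q (l₂ ++ l₁) hv).dimVec i := by
  funext i
  have hband : (bandRep K Q (l₁ ++ c :: l₂) hb lam r).dimVec i =
      Fintype.card ({j : Fin (l₁ ++ c :: l₂).length // bVtx _ hb j = i} × Fin r) :=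
    Module.finrank_fintype_fun_eq_card K
  have hstring : (stringRep K Q (l₂ ++ l₁) hv).dimVec i =
      Fintype.card {q : Fin ((l₂ ++ l₁).length + 1) // wVtx _ hv q = i} :=
    Module.finrank_fintype_fun_eq_card K
  rw [hband, hstring, Fintype.card_prod, Fintype.card_fin, Fintype.card_congr (cutEquiv hcomp hv i),
    mul_comm]

end DeletedString

theorem deleted_string_stability_space_subset_band_general
    (K : Type) [Field K] (Q : FinQuiver) (D : BoundQuiver Q)
    (b : List (Letter Q)) (hb : IsBand D b)
    (lam : K) (hlam : lam ≠ 0) (r : ℕ)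
    (v : List (Letter Q)) (hv : IsString D v) (hdel : DeleteOne b v) :
    stabSpace (stringRep K Q v hv.ne) ⊆ stabSpace (bandRep K Q b hb.1 lam r) := by
  obtain ⟨l₁, l₂, c, rfl, rfl⟩ := hdel
  have hbb : IsString D ((l₁ ++ c :: l₂) ++ (l₁ ++ c :: l₂)) := by
    simpa [listPow] using hb.2.1 2 one_le_two
  rintro θ ⟨hθ, hθsub⟩
  refine ⟨?_, fun N => ?_⟩
  · rw [dimVec_bandRep_cut hbb.comp hv.ne, stabInner_natCast_mul, hθ, mul_zero]
  · have hsub (μ : Fin r) := hθsub <| stringCoordSubRep K (l₂ ++ l₁) hv.ne _ fun _ _ _ h =>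
      IsLeadingBandCoord.of_stepsTo hbb.comp hbb.red hlam (μ := μ) (N := N) h
    simp only [finrank_stringCoordSubRep] at hsub
    simp only [finrank_eq_sum_card_isLeadingBandCoord hbb.comp hv.ne N, stabInner_sum]
    exact Finset.sum_nonpos fun μ _ => hsub μ

/-- If the string `v` is obtained from the band `b` by deleting one
letter, then the stability space of the string module `M(v)` is contained in the stability
space of the band module `M(b, λ, r)`. -/
theorem deleted_string_stability_space_subset_band
    (K : Type) [Field K] [IsAlgClosed K] (Q : FinQuiver) (D : BoundQuiver Q)
    (hsb : SpecialBiserial D) (b : List (Letter Q)) (hb : IsBand D b)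
    (lam : K) (hlam : lam ≠ 0) (r : ℕ) (hr : 1 ≤ r)
    (v : List (Letter Q)) (hv : IsString D v) (hdel : DeleteOne b v) :
    stabSpace (stringRep K Q v hv.ne) ⊆ stabSpace (bandRep K Q b hb.1 lam r) :=
  deleted_string_stability_space_subset_band_general K Q D b hb lam hlam r v hv hdel
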